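/- arXiv:0906.3655 — 3 statements merged into one kernel-verified Lean document; each statement's English description precedes it below -/
import Mathlib

section
/- For every n ≥ 2, if H ⊆ P satisfies condition (H1) in the incidence geometry G_n, then (4^n − 1)/3 ≤ |H|. -/
/-- The symplectic vector space `V_n = (ZMod 2)^(2n)` of the n-qubit real Pauli group. -/
abbrev V (n : ℕ) : Type := Fin (2 * n) → ZMod 2

/-- The index `2i-1` (0-based: `2i`). -/
def i0 {n : ℕ} (i : Fin n) : Fin (2 * n) := ⟨2 * i.1, by have := i.isLt; omega⟩

/-- The index `2i` (0-based: `2i+1`). -/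
def i1 {n : ℕ} (i : Fin n) : Fin (2 * n) := ⟨2 * i.1 + 1, by have := i.isLt; omega⟩

/-- The symplectic form `⟨x,y⟩ = Σ_{i=1}^n (x_{2i−1} y_{2i} + x_{2i} y_{2i−1})`. -/
def sform {n : ℕ} (x y : V n) : ZMod 2 :=
  ∑ i : Fin n, (x (i0 i) * y (i1 i) + x (i1 i) * y (i0 i))

/-- The point set `P = V_n \ {0}` of the incidence geometry `G_n`. -/
def P (n : ℕ) : Set (V n) := {x | x ≠ 0}

/-- The line set `L = {{a,b,a+b} : a,b ∈ P, a ≠ b, ⟨a,b⟩ = 0}` of `G_n`. -/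
def Lines (n : ℕ) : Set (Set (V n)) :=
  {l | ∃ a b : V n, a ∈ P n ∧ b ∈ P n ∧ a ≠ b ∧ sform a b = 0 ∧ l = {a, b, a + b}}

/-- A subset `H ⊆ P` satisfies condition (H1) if every line meets it in exactly
one point or is contained in it. -/
def IsH1 {n : ℕ} (H : Set (V n)) : Prop :=
  H ⊆ P n ∧ ∀ l ∈ Lines n, (H ∩ l).ncard = 1 ∨ l ⊆ H

/-- A geometric hyperplane: a subset satisfying (H1) which is not the full point set. -/
def IsHyperplane {n : ℕ} (H : Set (V n)) : Prop := IsH1 H ∧ H ≠ P n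

/-- `A ⊞ B`: the complement in `P` of the symmetric difference of `A` and `B`. -/
def boxAdd {n : ℕ} (A B : Set (V n)) : Set (V n) := P n \ (symmDiff A B)

/-- The quadratic form `Q_0(x) = Σ_{i=1}^n x_{2i−1} x_{2i}`. -/
def Q0 {n : ℕ} (x : V n) : ZMod 2 := ∑ i : Fin n, x (i0 i) * x (i1 i)

/-- The quadratic form `Q_p(x) = Q_0(x) + ⟨p,x⟩`. -/
def Qf {n : ℕ} (p x : V n) : ZMod 2 := Q0 x + sform p x

/-- The perp-set hyperplane `C_p = {x ∈ P : ⟨p,x⟩ = 0}`. -/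
def Cset {n : ℕ} (p : V n) : Set (V n) := {x ∈ P n | sform p x = 0}

/-- The quadric hyperplane `H_p = {x ∈ P : Q_p(x) = 0}`. -/
def Hset {n : ℕ} (p : V n) : Set (V n) := {x ∈ P n | Qf p x = 0}

/-- The symplectic transvection `t_p : x ↦ x + ⟨p,x⟩·p`. -/
def tv {n : ℕ} (p : V n) (x : V n) : V n := x + sform p x • p

/-!
Double counting. The ordered pairs `(a, b)` of distinct nonzero vectors with `⟨a, b⟩ = 0` number
`(4^n - 1)(2^(2n-1) - 2)`, since `⟨a, ·⟩` is a nonzero functional for `a ≠ 0`. The line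
`{a, b, a + b}` of each such pair meets `H`, while a point `h` occurs as `a`, as `b` or as
`a + b` in at most `3(2^(2n-1) - 2)` of these pairs. Since `2^(2n-1) > 2` for `n ≥ 2`, this
gives `4^n - 1 ≤ 3|H|`.
-/

open Finset

lemma card_filter_eq_zero_mul_two {G : Type*} [AddCommGroup G] [Fintype G]
    (f : G →+ ZMod 2) (hf : Function.Surjective f) :
    #{x | f x = 0} * 2 = Fintype.card G := by
  have := f.ker.card_mul_index
  rw [AddSubgroup.index_ker, AddMonoidHom.range_eq_top.mpr hf] at this
  simpa [Nat.card_eq_fintype_card, ← Fintype.card_subtype, AddMonoidHom.mem_ker] using this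

section Symplectic

variable {n : ℕ}

lemma V.add_self (x : V n) : x + x = 0 := funext fun i => CharTwo.add_self_eq_zero (x i)

lemma sform_comm (x y : V n) : sform x y = sform y x := by
  unfold sform; exact sum_congr rfl fun _ _ => by ring

lemma sform_add_right (a x y : V n) : sform a (x + y) = sform a x + sform a y := by
  simp only [sform, Pi.add_apply, ← sum_add_distrib]
  exact sum_congr rfl fun _ _ => by ring

lemma sform_zero_right (a : V n) : sform a 0 = 0 := by simp [sform]

lemma sform_self (a : V n) : sform a a = 0 :=
  sum_eq_zero fun i _ => by rw [mul_comm (a (i1 i))]; exact CharTwo.add_self_eq_zero _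

lemma i0_ne_i1 (i k : Fin n) : i0 i ≠ i1 k := by
  simp only [i0, i1, ne_eq, Fin.ext_iff]; omega

lemma i0_inj {i k : Fin n} : i0 i = i0 k ↔ i = k := by
  simp only [i0, Fin.ext_iff]; omega

lemma i1_inj {i k : Fin n} : i1 i = i1 k ↔ i = k := by
  simp only [i1, Fin.ext_iff]; omega

lemma exists_eq_i0_or_eq_i1 (j : Fin (2 * n)) : ∃ i : Fin n, j = i0 i ∨ j = i1 i :=
  ⟨⟨j / 2, by omega⟩, by simp only [i0, i1, Fin.ext_iff]; omega⟩

lemma sform_single_i0 (a : V n) (i : Fin n) : sform a (Pi.single (i0 i) 1) = a (i1 i) := by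
  simp [sform, Pi.single_apply, i0_inj, i0_ne_i1]

lemma sform_single_i1 (a : V n) (i : Fin n) : sform a (Pi.single (i1 i) 1) = a (i0 i) := by
  simp [sform, Pi.single_apply, i1_inj, (i0_ne_i1 _ _).symm]

lemma exists_sform_eq_one {a : V n} (ha : a ≠ 0) : ∃ c : V n, sform a c = 1 := by
  obtain ⟨j, hj⟩ := Function.ne_iff.mp ha
  have haj : a j = 1 := (by decide : ∀ x : ZMod 2, x ≠ 0 → x = 1) _ hj
  obtain ⟨i, rfl | rfl⟩ := exists_eq_i0_or_eq_i1 j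
  · exact ⟨Pi.single (i1 i) 1, by rw [sform_single_i1, haj]⟩
  · exact ⟨Pi.single (i0 i) 1, by rw [sform_single_i0, haj]⟩

def sformRight (a : V n) : V n →+ ZMod 2 := AddMonoidHom.mk' (sform a) (sform_add_right a)

lemma sformRight_surjective {a : V n} (ha : a ≠ 0) : Function.Surjective (sformRight a) := by
  obtain ⟨c, hc⟩ := exists_sform_eq_one ha
  intro y; fin_cases y
  · exact ⟨0, sform_zero_right a⟩
  · exact ⟨c, hc⟩

end Symplectic

section Counting

variable {n : ℕ}

def perpPoints (a : V n) : Finset (V n) := {b | b ≠ 0 ∧ b ≠ a ∧ sform a b = 0}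

lemma card_perpPoints {a : V n} (ha : a ≠ 0) : #(perpPoints a) = 2 ^ (2 * n - 1) - 2 := by
  have hker := card_filter_eq_zero_mul_two _ (sformRight_surjective ha)
  have hn : n ≠ 0 := by rintro rfl; exact ha (funext fun j => absurd j.isLt (by omega))
  have hperp : perpPoints a = ({b | sform a b = 0} : Finset (V n)) \ {0, a} := by
    ext b
    simp only [perpPoints, mem_filter, mem_sdiff, mem_insert, mem_singleton, mem_univ, true_and]
    tauto
  have hsub : {0, a} ⊆ ({b | sform a b = 0} : Finset (V n)) := by
    simp [insert_subset_iff, sform_zero_right, sform_self]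
  rw [hperp, card_sdiff_of_subset hsub, card_pair (Ne.symm ha)]
  simp only [Fintype.card_fun, ZMod.card, Fintype.card_fin] at hker
  change #{b | sform a b = 0} * 2 = 2 ^ (2 * n) at hker
  have hpow : 2 ^ (2 * n) = 2 ^ (2 * n - 1) * 2 := by
    rw [← pow_succ, Nat.sub_add_cancel (by omega)]
  rw [Nat.eq_of_mul_eq_mul_right two_pos (hker.trans hpow)]

variable (n) in
def linePairs : Finset (Σ _ : V n, V n) := ({a | a ≠ 0} : Finset (V n)).sigma perpPoints

lemma card_linePairs : #(linePairs n) = (4 ^ n - 1) * (2 ^ (2 * n - 1) - 2) := by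
  rw [linePairs, card_sigma, sum_congr rfl fun a ha => card_perpPoints (mem_filter.mp ha).2,
    sum_const, smul_eq_mul, filter_ne', card_erase_of_mem (mem_univ _), card_univ]
  simp [pow_mul]

def pairsThrough (h : V n) : Finset (Σ _ : V n, V n) :=
  (perpPoints h).image (fun b => ⟨h, b⟩) ∪ (perpPoints h).image (fun a => ⟨a, h⟩) ∪
    (perpPoints h).image (fun a => ⟨a, a + h⟩)

lemma card_pairsThrough_le (h : V n) : #(pairsThrough h) ≤ 3 * #(perpPoints h) := by
  grw [pairsThrough, card_union_le, card_union_le, card_image_le, card_image_le, card_image_le]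
  omega

lemma mem_pairsThrough {a b h : V n} (hab : ⟨a, b⟩ ∈ linePairs n)
    (hh : h = a ∨ h = b ∨ h = a + b) : ⟨a, b⟩ ∈ pairsThrough h := by
  simp only [linePairs, perpPoints, mem_sigma, mem_filter, mem_univ, true_and] at hab
  obtain ⟨ha, hb, hba, hperp⟩ := hab
  simp only [pairsThrough, perpPoints, mem_union, mem_image, mem_filter, mem_univ, true_and,
    Sigma.mk.injEq, heq_eq_eq]
  rcases hh with rfl | rfl | rfl
  · exact Or.inl (Or.inl ⟨b, ⟨hb, hba, hperp⟩, rfl, rfl⟩)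
  · exact Or.inl (Or.inr ⟨a, ⟨ha, Ne.symm hba, by rw [sform_comm, hperp]⟩, rfl, rfl⟩)
  · refine Or.inr ⟨a, ⟨ha, ?_, ?_⟩, rfl, ?_⟩
    · exact left_ne_add.mpr hb
    · rw [sform_comm, sform_add_right, sform_self, zero_add, hperp]
    · rw [← add_assoc, V.add_self, zero_add]

lemma mem_Lines_of_mem_linePairs {a b : V n} (hab : ⟨a, b⟩ ∈ linePairs n) :
    ({a, b, a + b} : Set (V n)) ∈ Lines n := by
  simp only [linePairs, perpPoints, mem_sigma, mem_filter, mem_univ, true_and] at hab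
  obtain ⟨ha, hb, hba, hperp⟩ := hab
  exact ⟨a, b, ha, hb, Ne.symm hba, hperp, rfl⟩

end Counting

lemma IsH1.inter_nonempty {n : ℕ} {H : Set (V n)} (hH : IsH1 H) {l : Set (V n)}
    (hl : l ∈ Lines n) : (H ∩ l).Nonempty := by
  rcases hH.2 l hl with hcard | hsub
  · exact Set.nonempty_of_ncard_ne_zero (by rw [hcard]; exact one_ne_zero)
  · obtain ⟨a, b, -, -, -, -, rfl⟩ := hl
    exact ⟨a, hsub (by simp), by simp⟩

lemma card_linePairs_le {n : ℕ} (S : Finset (V n)) (hS0 : 0 ∉ S)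
    (hS : ∀ p ∈ linePairs n, ∃ h ∈ S, h = p.1 ∨ h = p.2 ∨ h = p.1 + p.2) :
    #(linePairs n) ≤ 3 * #S * (2 ^ (2 * n - 1) - 2) := by
  have hcover : linePairs n ⊆ S.biUnion pairsThrough := fun ⟨a, b⟩ hab => by
    obtain ⟨h, hS, hh⟩ := hS _ hab
    exact mem_biUnion.mpr ⟨h, hS, mem_pairsThrough hab hh⟩
  calc #(linePairs n) ≤ ∑ h ∈ S, #(pairsThrough h) :=
        (card_le_card hcover).trans card_biUnion_le
    _ ≤ ∑ h ∈ S, 3 * #(perpPoints h) := sum_le_sum fun h _ => card_pairsThrough_le h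
    _ = 3 * #S * (2 ^ (2 * n - 1) - 2) := by
      rw [sum_congr rfl fun h hh => by rw [card_perpPoints (ne_of_mem_of_not_mem hh hS0)],
        sum_const, smul_eq_mul, mul_left_comm, mul_assoc]

theorem stmt1 (n : ℕ) (hn : 2 ≤ n) (H : Set (V n)) (hH : IsH1 H) :
    ((4 ^ n - 1 : ℚ)) / 3 ≤ (H.ncard : ℚ) := by
  classical
  have hblocking :
      ∀ p ∈ linePairs n, ∃ h ∈ H.toFinset, h = p.1 ∨ h = p.2 ∨ h = p.1 + p.2 := by
    rintro ⟨a, b⟩ hab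
    obtain ⟨h, hH, hl⟩ := hH.inter_nonempty (mem_Lines_of_mem_linePairs hab)
    exact ⟨h, Set.mem_toFinset.mpr hH, hl⟩
  have hcount :=
    card_linePairs_le H.toFinset (fun h0 => hH.1 (Set.mem_toFinset.mp h0) rfl) hblocking
  rw [card_linePairs, ← Set.ncard_eq_toFinset_card'] at hcount
  have hD : 0 < 2 ^ (2 * n - 1) - 2 := by
    have : 2 ^ 3 ≤ 2 ^ (2 * n - 1) := Nat.pow_le_pow_right two_pos (by omega)
    omega
  have h4 : 4 ^ n ≤ 3 * H.ncard + 1 := by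
    have := Nat.le_of_mul_le_mul_right hcount hD
    omega
  have h4' : (4 : ℚ) ^ n ≤ 3 * H.ncard + 1 := by exact_mod_cast h4
  rw [div_le_iff₀ three_pos]
  linarith
end

section
/- For every n ≥ 1, if A and B are distinct geometric hyperplanes of the incidence geometry G_n, then A ⊞ B, the complement in P of the symmetric difference of A and B, is also a geometric hyperplane. -/
lemma tri_one {α : Type*} {H : Set α} {a b c : α} (h1 : a ∈ H) (h2 : b ∉ H) (h3 : c ∉ H) :
    H ∩ {a, b, c} = {a} := by
  ext x
  simp only [Set.mem_inter_iff, Set.mem_insert_iff, Set.mem_singleton_iff]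
  constructor
  · rintro ⟨hH, rfl | rfl | rfl⟩
    · rfl
    · exact absurd hH h2
    · exact absurd hH h3
  · rintro rfl; exact ⟨h1, Or.inl rfl⟩

lemma tri_card {α : Type*} {H : Set α} {a b c : α} (hab : a ≠ b) (hac : a ≠ c) (hbc : b ≠ c) :
    ((H ∩ {a, b, c}).ncard = 1 ∨ ({a, b, c} : Set α) ⊆ H) ↔
      ((a ∈ H ∧ b ∉ H ∧ c ∉ H) ∨ (a ∉ H ∧ b ∈ H ∧ c ∉ H) ∨ (a ∉ H ∧ b ∉ H ∧ c ∈ H) ∨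
        (a ∈ H ∧ b ∈ H ∧ c ∈ H)) := by
  constructor
  · rintro (h1 | hsub)
    · rw [Set.ncard_eq_one] at h1
      obtain ⟨x, hx⟩ := h1
      have hxm : x ∈ H ∩ {a, b, c} := by rw [hx]; exact rfl
      have key : ∀ y, y ∈ ({a, b, c} : Set α) → y ∈ H → y = x := by
        intro y hy hH
        have : y ∈ H ∩ {a, b, c} := ⟨hH, hy⟩
        rw [hx] at this; exact this
      have hma : a ∈ ({a, b, c} : Set α) := by simp
      have hmb : b ∈ ({a, b, c} : Set α) := by simp
      have hmc : c ∈ ({a, b, c} : Set α) := by simp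
      rcases hxm.2 with rfl | rfl | rfl
      · exact Or.inl ⟨hxm.1, fun h => hab (key b hmb h).symm, fun h => hac (key c hmc h).symm⟩
      · exact Or.inr (Or.inl ⟨fun h => hab (key a hma h), hxm.1, fun h => hbc (key c hmc h).symm⟩)
      · exact Or.inr (Or.inr (Or.inl ⟨fun h => hac (key a hma h), fun h => hbc (key b hmb h), hxm.1⟩))
    · refine Or.inr (Or.inr (Or.inr ⟨?_, ?_, ?_⟩)) <;> apply hsub <;> simp
  · rintro (⟨h1, h2, h3⟩ | ⟨h1, h2, h3⟩ | ⟨h1, h2, h3⟩ | ⟨h1, h2, h3⟩)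
    · exact Or.inl (by rw [tri_one h1 h2 h3]; simp)
    · refine Or.inl ?_
      have : H ∩ {a, b, c} = {b} := by
        rw [show ({a, b, c} : Set α) = {b, a, c} by ext; simp; tauto]
        exact tri_one h2 h1 h3
      rw [this]; simp
    · refine Or.inl ?_
      have : H ∩ {a, b, c} = {c} := by
        rw [show ({a, b, c} : Set α) = {c, a, b} by ext; simp; tauto]
        exact tri_one h3 h1 h2
      rw [this]; simp
    · right; rintro x (rfl | rfl | rfl) <;> assumption

lemma prop6 (pA qA rA pB qB rB : Prop) :
    pA ∧ ¬qA ∧ ¬rA ∨ ¬pA ∧ qA ∧ ¬rA ∨ ¬pA ∧ ¬qA ∧ rA ∨ pA ∧ qA ∧ rA →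
    pB ∧ ¬qB ∧ ¬rB ∨ ¬pB ∧ qB ∧ ¬rB ∨ ¬pB ∧ ¬qB ∧ rB ∨ pB ∧ qB ∧ rB →
      (pA ↔ pB) ∧ ¬(qA ↔ qB) ∧ ¬(rA ↔ rB) ∨
        ¬(pA ↔ pB) ∧ (qA ↔ qB) ∧ ¬(rA ↔ rB) ∨ ¬(pA ↔ pB) ∧ ¬(qA ↔ qB) ∧ (rA ↔ rB) ∨
        (pA ↔ pB) ∧ (qA ↔ qB) ∧ (rA ↔ rB) := by
  rintro (⟨h1,h2,h3⟩|⟨h1,h2,h3⟩|⟨h1,h2,h3⟩|⟨h1,h2,h3⟩) (⟨g1,g2,g3⟩|⟨g1,g2,g3⟩|⟨g1,g2,g3⟩|⟨g1,g2,g3⟩) <;>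
    simp [h1, h2, h3, g1, g2, g3]

theorem stmt5 (n : ℕ) (hn : 1 ≤ n) (A B : Set (V n)) (hA : IsHyperplane A)
    (hB : IsHyperplane B) (hAB : A ≠ B) : IsHyperplane (boxAdd A B) := by
  obtain ⟨⟨hAP, hAl⟩, hAne⟩ := hA
  obtain ⟨⟨hBP, hBl⟩, hBne⟩ := hB
  have memBox : ∀ x : V n, x ∈ P n → (x ∈ boxAdd A B ↔ (x ∈ A ↔ x ∈ B)) := by
    intro x hx
    simp only [boxAdd, Set.mem_diff, Set.mem_symmDiff]
    tauto
  constructor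
  · constructor
    · intro x hx; exact hx.1
    · intro l hl
      obtain ⟨a, b, haP, hbP, hab, hs, rfl⟩ := hl
      have hself : ∀ y : V n, y + y = 0 := fun y => funext fun i => CharTwo.add_self_eq_zero (y i)
      have hsum : a + b ∈ P n := by
        intro h0
        apply hab
        have h' : a + b + b = (0 : V n) + b := by rw [h0]
        rw [add_assoc, hself b, add_zero, zero_add] at h'
        exact h'
      have h1 : a ≠ a + b := by
        intro h
        apply hbP
        have h' := congrArg (a + ·) h
        simp only [← add_assoc, hself a, zero_add] at h'
        exact h'.symm
      have h2 : b ≠ a + b := by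
        intro h
        apply haP
        have h' := congrArg (· + b) h
        simp only [add_assoc, hself b, add_zero] at h'
        exact h'.symm
      have hA' := (tri_card hab h1 h2).1 (hAl _ ⟨a, b, haP, hbP, hab, hs, rfl⟩)
      have hB' := (tri_card hab h1 h2).1 (hBl _ ⟨a, b, haP, hbP, hab, hs, rfl⟩)
      rw [tri_card hab h1 h2, memBox a haP, memBox b hbP, memBox _ hsum]
      revert hA' hB'
      generalize (a ∈ A) = pA
      generalize (b ∈ A) = qA
      generalize (a + b ∈ A) = rA
      generalize (a ∈ B) = pB
      generalize (b ∈ B) = qB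
      generalize (a + b ∈ B) = rB
      exact prop6 pA qA rA pB qB rB
  · intro h
    have hne : symmDiff A B ≠ ⊥ := fun he => hAB (symmDiff_eq_bot.mp he)
    obtain ⟨x, hx⟩ := Set.nonempty_iff_ne_empty.2 hne
    have hxP : x ∈ P n := by
      rcases Set.mem_symmDiff.1 hx with ⟨h1, _⟩ | ⟨h1, _⟩
      · exact hAP h1
      · exact hBP h1
    have : x ∈ boxAdd A B := h ▸ hxP
    exact this.2 hx
end

section
/- For every n ≥ 1 and all p, a ∈ V_n, the symplectic transvection t_p satisfies t_p(C_a) = C_{t_p(a)} and t_p(H_a) = H_{a + (1 + Q_a(p))·p}, where images are taken pointwise. -/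
/-!
The transvection `t_p` is an involution and is self-adjoint for `⟨·,·⟩`, since
`⟨a, t_p x⟩ = ⟨a,x⟩ + ⟨p,x⟩⟨a,p⟩ = ⟨t_p a, x⟩`. Hence `t_p(C_a) = t_p⁻¹(C_a)` is cut out by
`⟨t_p a, ·⟩`. Likewise, expanding `Q_a(x + ⟨p,x⟩p)` and using `λ² = λ` in `ZMod 2` gives
`Q_a ∘ t_p = Q_{a + (1 + Q_a(p))p}`.
-/

lemma zmod_two_mul_self (c : ZMod 2) : c * c = c := by
  fin_cases c <;> rfl

namespace Transvection

variable {n : ℕ}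

lemma sform_comm (x y : V n) : sform x y = sform y x :=
  Finset.sum_congr rfl fun _ _ => by ring

lemma sform_add_right (u x y : V n) : sform u (x + y) = sform u x + sform u y := by
  simp only [sform, ← Finset.sum_add_distrib, Pi.add_apply]
  exact Finset.sum_congr rfl fun _ _ => by ring

lemma sform_add_left (x y u : V n) : sform (x + y) u = sform x u + sform y u := by
  rw [sform_comm, sform_add_right, sform_comm u, sform_comm u]

lemma sform_smul_right (u : V n) (c : ZMod 2) (y : V n) : sform u (c • y) = c * sform u y := by
  simp only [sform, Finset.mul_sum, Pi.smul_apply, smul_eq_mul]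
  exact Finset.sum_congr rfl fun _ _ => by ring

lemma sform_smul_left (c : ZMod 2) (x u : V n) : sform (c • x) u = c * sform x u := by
  rw [sform_comm, sform_smul_right, sform_comm]

lemma sform_self (x : V n) : sform x x = 0 :=
  Finset.sum_eq_zero fun i _ => by rw [mul_comm (x (i1 i))]; exact CharTwo.add_self_eq_zero _

lemma Q0_add (x y : V n) : Q0 (x + y) = Q0 x + Q0 y + sform x y := by
  simp only [Q0, sform, ← Finset.sum_add_distrib, Pi.add_apply]
  exact Finset.sum_congr rfl fun _ _ => by ring

lemma Q0_smul (c : ZMod 2) (x : V n) : Q0 (c • x) = c * Q0 x := by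
  simp only [Q0, Finset.mul_sum, Pi.smul_apply, smul_eq_mul]
  refine Finset.sum_congr rfl fun i _ => ?_
  rw [mul_mul_mul_comm, zmod_two_mul_self]

lemma tv_involutive (p : V n) : Function.Involutive (tv p) := fun x => by
  rw [tv, tv, sform_add_right, sform_smul_right, sform_self, mul_zero, add_zero, add_assoc,
    ← add_smul, CharTwo.add_self_eq_zero, zero_smul, add_zero]

lemma tv_eq_zero_iff (p x : V n) : tv p x = 0 ↔ x = 0 :=
  (tv_involutive p).injective.eq_iff' (by simp [tv, sform])

lemma sform_tv_right (p a x : V n) : sform a (tv p x) = sform (tv p a) x := by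
  rw [tv, tv, sform_add_right, sform_add_left, sform_smul_right, sform_smul_left,
    sform_comm a p]
  ring

lemma Qf_tv_right (p a x : V n) : Qf a (tv p x) = Qf (a + (1 + Qf a p) • p) x := by
  have hsq : sform p x * sform p x = sform p x := zmod_two_mul_self _
  rw [Qf, Qf, Qf, tv, Q0_add, Q0_smul, sform_add_right, sform_add_left, sform_smul_right,
    sform_smul_right, sform_smul_left, sform_comm x p]
  linear_combination hsq

lemma image_tv_sep_P (p : V n) {φ ψ : V n → ZMod 2} (h : ∀ x, φ (tv p x) = ψ x) :
    tv p '' {x ∈ P n | φ x = 0} = {x ∈ P n | ψ x = 0} := by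
  rw [Set.image_eq_preimage_of_inverse (tv_involutive p).leftInverse
    (tv_involutive p).rightInverse]
  ext x
  simp only [Set.mem_preimage, P, Set.mem_ofPred_eq, ne_eq, tv_eq_zero_iff, h]

end Transvection

theorem stmt13_general (n : ℕ) (p a : V n) :
    tv p '' Cset a = Cset (tv p a) ∧
    tv p '' Hset a = Hset (a + (1 + Qf a p) • p) :=
  ⟨Transvection.image_tv_sep_P p (Transvection.sform_tv_right p a),
    Transvection.image_tv_sep_P p (Transvection.Qf_tv_right p a)⟩

theorem stmt13 (n : ℕ) (hn : 1 ≤ n) (p a : V n) :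
    tv p '' Cset a = Cset (tv p a) ∧
    tv p '' Hset a = Hset (a + (1 + Qf a p) • p) :=
  stmt13_general n p a
end
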